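/- arXiv:1406.6029 — 8 statements merged into one kernel-verified Lean document; each statement's English description precedes it below -/
import Mathlib

section
/- If n = ∑_{j=1}^t 2^{k_j} with k_1 > k_2 > ... > k_t ≥ 0, then ∑_{m=0}^{n-1} H(m) = ∑_{j=1}^t (k_j·2^{k_j-1} + (j-1)·2^{k_j}). -/
/-- Hamming weight: number of ones in the binary expansion. -/
def hammingWeight (k : ℕ) : ℕ := (Nat.digits 2 k).sum

/-! Adding `2 ^ k` to `m < 2 ^ k` adds exactly one to the Hamming weight. Hence `[0, 2 ^ k)`,
being two copies of `[0, 2 ^ (k - 1))` the second of which carries the extra top bit, has total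
weight `k * 2 ^ (k - 1)`. Splitting `[0, n)` at the leading power `2 ^ k₁` leaves a translate of
`[0, n - 2 ^ k₁)` in which every number carries that extra bit; iterating, the `2 ^ k_j` numbers
of the `j`-th block carry `j - 1` extra bits. -/

open Finset

theorem hammingWeight_add_two_pow {m k : ℕ} (hm : m < 2 ^ k) :
    hammingWeight (m + 2 ^ k) = hammingWeight m + 1 := by
  have hlen : (Nat.digits 2 m).length ≤ k := (Nat.digits_length_le_iff one_lt_two m).2 hm
  have h := Nat.digits_append_zeroes_append_digits (b := 2) (n := m)
    (k := k - (Nat.digits 2 m).length) one_lt_two one_pos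
  rw [Nat.add_sub_cancel' hlen, mul_one] at h
  rw [hammingWeight, ← h]
  simp [hammingWeight]

theorem sum_range_hammingWeight_two_pow_add {k n : ℕ} (hn : n ≤ 2 ^ k) :
    ∑ m ∈ range (2 ^ k + n), hammingWeight m =
      ∑ m ∈ range (2 ^ k), hammingWeight m + ∑ m ∈ range n, hammingWeight m + n := by
  rw [sum_range_add, add_assoc]
  congr 1
  calc ∑ m ∈ range n, hammingWeight (2 ^ k + m)
      = ∑ m ∈ range n, (hammingWeight m + 1) := sum_congr rfl fun m hm ↦ by
        rw [add_comm, hammingWeight_add_two_pow ((mem_range.1 hm).trans_le hn)]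
    _ = ∑ m ∈ range n, hammingWeight m + n := by simp [sum_add_distrib]

theorem sum_range_hammingWeight_two_pow (k : ℕ) :
    ∑ m ∈ range (2 ^ k), hammingWeight m = k * 2 ^ (k - 1) := by
  induction k with
  | zero => simp [hammingWeight]
  | succ k ih =>
    rw [pow_succ, mul_two, sum_range_hammingWeight_two_pow_add le_rfl, ih]
    cases k with
    | zero => simp
    | succ k => simp only [Nat.add_sub_cancel, pow_succ]; ring

theorem sum_two_pow_lt_two_pow_of_injective {ι : Type*} [Fintype ι] {k : ι → ℕ}
    (hk : Function.Injective k) {N : ℕ} (hN : ∀ i, k i < N) : ∑ i, 2 ^ k i < 2 ^ N := by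
  rw [← sum_image fun i _ j _ h ↦ hk h]
  exact Nat.geomSum_lt le_rfl (by simpa using hN)

theorem sum_hammingWeight_of_binary_expansion (t : ℕ) (k : Fin t → ℕ)
    (hk : StrictAnti k) (n : ℕ) (hn : n = ∑ j : Fin t, 2 ^ k j) :
    ∑ m ∈ Finset.range n, hammingWeight m =
      ∑ j : Fin t, (k j * 2 ^ (k j - 1) + (j : ℕ) * 2 ^ k j) := by
  induction t generalizing n with
  | zero => simp [hn]
  | succ t ih =>
    have htail : StrictAnti fun j : Fin t ↦ k j.succ := hk.comp_strictMono Fin.strictMono_succ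
    have hlt : ∑ j : Fin t, 2 ^ k j.succ < 2 ^ k 0 :=
      sum_two_pow_lt_two_pow_of_injective htail.injective fun j ↦ hk (Fin.succ_pos j)
    rw [Fin.sum_univ_succ] at hn ⊢
    rw [hn, sum_range_hammingWeight_two_pow_add hlt.le, sum_range_hammingWeight_two_pow,
      ih _ htail _ rfl]
    simp only [Fin.val_zero, Fin.val_succ, zero_mul, add_zero, add_one_mul, sum_add_distrib]
    ring
end

section
/- Let V_n ⊆ {0,1}^d be the set of binary expansions of the integers 0 through n-1 (for n ≤ 2^d), with two vertices adjacent iff their Hamming distance is 1. The number of edges of the induced subgraph on V_n equals ∑_{k=0}^{n-1} H(k), where H is the Hamming weight. -/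
/-- The vertex of the hypercube `{0,1}^d` given by the binary expansion of `k`. -/
def binVec (d k : ℕ) : Fin d → Bool := fun i => k.testBit i

open Finset

theorem hammingWeight_eq_mod_two_add_div_two (k : ℕ) :
    hammingWeight k = k % 2 + hammingWeight (k / 2) := by
  rcases Nat.eq_zero_or_pos k with rfl | hk
  · rfl
  · rw [hammingWeight, Nat.digits_def' one_lt_two hk, List.sum_cons, hammingWeight]

theorem hammingWeight_eq_card_testBit {d k : ℕ} (hk : k < 2 ^ d) :
    hammingWeight k = #{i : Fin d | k.testBit i} := by
  induction d generalizing k with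
  | zero =>
    obtain rfl : k = 0 := by simpa using hk
    rfl
  | succ d ih =>
    rw [card_filter, Fin.sum_univ_succ, ← card_filter]
    simp only [Fin.val_zero, Fin.val_succ, Nat.testBit_succ, Nat.testBit_zero]
    rw [← ih (by omega), hammingWeight_eq_mod_two_add_div_two]
    rcases Nat.mod_two_eq_zero_or_one k with h | h <;> simp [h]

theorem Nat.xor_two_pow_lt_iff {b i : ℕ} : b ^^^ 2 ^ i < b ↔ b.testBit i := by
  have high : ∀ j, i < j → (b ^^^ 2 ^ i).testBit j = b.testBit j := fun j hj => by
    simp [Nat.testBit_two_pow_of_ne hj.ne]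
  cases h : b.testBit i
  · simpa using (Nat.lt_of_testBit i h (by simp [h]) fun j hj => (high j hj).symm).le
  · simpa using Nat.lt_of_testBit i (by simp [h]) h high

theorem hammingDist_binVec (d a b : ℕ) :
    hammingDist (binVec d a) (binVec d b) = #{i : Fin d | (a ^^^ b).testBit i} := by
  unfold hammingDist binVec
  simp only [Nat.testBit_xor, bne_iff_ne, ne_eq]

theorem card_testBit_eq_one_iff {d c : ℕ} (hc : c < 2 ^ d) :
    #{i : Fin d | c.testBit i} = 1 ↔ ∃ i : Fin d, c = 2 ^ (i : ℕ) := by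
  rw [card_eq_one]
  constructor
  · rintro ⟨i, hi⟩
    refine ⟨i, Nat.eq_of_testBit_eq fun m => ?_⟩
    rw [Nat.testBit_two_pow]
    rcases lt_or_ge m d with hm | hm
    · have hm_mem := Finset.ext_iff.1 hi ⟨m, hm⟩
      simp only [mem_filter, mem_univ, true_and, mem_singleton, Fin.ext_iff] at hm_mem
      rw [Bool.eq_iff_iff, hm_mem, decide_eq_true_iff, eq_comm]
    · rw [Nat.testBit_lt_two_pow (hc.trans_le (Nat.pow_le_pow_right two_pos hm))]
      simp only [Bool.false_eq, decide_eq_false_iff_not]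
      omega
  · rintro ⟨i, rfl⟩
    exact ⟨i, by ext j; simp [Nat.testBit_two_pow, Fin.ext_iff, eq_comm]⟩

theorem lt_and_hammingDist_binVec_eq_one_iff {d a b : ℕ} (hb : b < 2 ^ d) :
    a < b ∧ hammingDist (binVec d a) (binVec d b) = 1 ↔
      ∃ i : Fin d, b.testBit i ∧ a = b ^^^ 2 ^ (i : ℕ) := by
  rw [hammingDist_binVec]
  constructor
  · rintro ⟨hab, hdist⟩
    obtain ⟨i, hi⟩ := (card_testBit_eq_one_iff (Nat.xor_lt_two_pow (hab.trans hb) hb)).1 hdist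
    have ha : a = b ^^^ 2 ^ (i : ℕ) := by
      rw [← hi, Nat.xor_comm a b, Nat.xor_xor_cancel_left]
    exact ⟨i, Nat.xor_two_pow_lt_iff.1 (ha ▸ hab), ha⟩
  · rintro ⟨i, hi, rfl⟩
    refine ⟨Nat.xor_two_pow_lt_iff.2 hi, ?_⟩
    rw [Nat.xor_comm b, Nat.xor_xor_cancel_right,
      card_testBit_eq_one_iff (Nat.pow_lt_pow_right one_lt_two i.isLt)]
    exact ⟨i, rfl⟩

theorem card_lower_neighbors_binVec {d n b : ℕ} (hn : n ≤ 2 ^ d) (hb : b < n) :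
    #{a ∈ range n | a < b ∧ hammingDist (binVec d a) (binVec d b) = 1} = hammingWeight b := by
  have hb' : b < 2 ^ d := hb.trans_le hn
  have hlower : {a ∈ range n | a < b ∧ hammingDist (binVec d a) (binVec d b) = 1} =
      ({i : Fin d | b.testBit i} : Finset (Fin d)).image fun i : Fin d => b ^^^ 2 ^ (i : ℕ) := by
    ext a
    simp only [mem_filter, mem_range, mem_image, mem_univ, true_and,
      lt_and_hammingDist_binVec_eq_one_iff hb', eq_comm (a := a)]
    constructor
    · exact fun h => h.2
    · rintro ⟨i, hi, rfl⟩
      exact ⟨(Nat.xor_two_pow_lt_iff.2 hi).trans hb, i, hi, rfl⟩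
  rw [hlower, card_image_of_injective _ fun i j hij => ?_, hammingWeight_eq_card_testBit hb']
  exact Fin.ext (Nat.pow_right_injective le_rfl (Nat.xor_right_injective hij))

theorem edges_of_initial_segment (d n : ℕ) (hn : n ≤ 2 ^ d) :
    (Finset.filter
        (fun p : ℕ × ℕ => p.1 < p.2 ∧ hammingDist (binVec d p.1) (binVec d p.2) = 1)
        (Finset.range n ×ˢ Finset.range n)).card
      = ∑ k ∈ Finset.range n, hammingWeight k := by
  rw [card_filter, sum_product_right]
  refine sum_congr rfl fun b hb => ?_
  rw [← card_filter]
  exact card_lower_neighbors_binVec hn (mem_range.1 hb)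
end

section
/- For any n ≤ 2^d and any n-element subset V of {0,1}^d, the number of edges of the induced subgraph of the hypercube graph on V is at most the number of edges induced on the set V_n of binary expansions of 0 through n-1, which is ∑_{k=0}^{n-1} H(k). -/
/-!
Write `F n = ∑_{k<n} H(k)`. Splitting `V ⊆ {0,1}^(d+1)` by the first coordinate gives two sets
`V₀, V₁ ⊆ {0,1}^d`; the edges of `V` are those inside `V₀`, those inside `V₁`, and one edge for each
point of `V₀ ∩ V₁`. By induction on `d` it therefore suffices that `F a + F b + min a b ≤ F (a + b)`.
This follows by strong induction from `F n = F ⌊n/2⌋ + F ⌈n/2⌉ + ⌊n/2⌋` (even `k` contribute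
`F ⌈n/2⌉`, odd `k` contribute `F ⌊n/2⌋` plus one per term), applied to `a + b` after pairing
the halves of `a` with the halves of `b` crosswise.
-/

open Finset

theorem hammingWeight_eq_div_two_add_mod_two (k : ℕ) :
    hammingWeight k = hammingWeight (k / 2) + k % 2 := by
  rcases Nat.eq_zero_or_pos k with rfl | hk
  · rfl
  · rw [hammingWeight, Nat.digits_def' (by norm_num) hk, List.sum_cons, add_comm]
    rfl

def hammingWeightSum (n : ℕ) : ℕ := ∑ k ∈ range n, hammingWeight k

theorem hammingWeightSum_eq_halves : ∀ n : ℕ,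
    hammingWeightSum n = hammingWeightSum (n / 2) + hammingWeightSum ((n + 1) / 2) + n / 2
  | 0 => rfl
  | 1 => rfl
  | n + 2 => by
    have ih := hammingWeightSum_eq_halves n
    have hn := hammingWeight_eq_div_two_add_mod_two n
    have hn₁ := hammingWeight_eq_div_two_add_mod_two (n + 1)
    simp only [hammingWeightSum, sum_range_succ] at ih ⊢
    rw [show (n + 2) / 2 = n / 2 + 1 by omega, show (n + 2 + 1) / 2 = (n + 1) / 2 + 1 by omega,
      sum_range_succ, sum_range_succ]
    omega

theorem hammingWeightSum_add_add_min_le (a b : ℕ) :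
    hammingWeightSum a + hammingWeightSum b + min a b ≤ hammingWeightSum (a + b) := by
  rcases Nat.eq_zero_or_pos a with rfl | ha
  · simp [hammingWeightSum]
  rcases Nat.eq_zero_or_pos b with rfl | hb
  · simp [hammingWeightSum]
  have h₁ := hammingWeightSum_add_add_min_le (a / 2) ((b + 1) / 2)
  have h₂ := hammingWeightSum_add_add_min_le ((a + 1) / 2) (b / 2)
  have eab := hammingWeightSum_eq_halves (a + b)
  have ea := hammingWeightSum_eq_halves a
  have eb := hammingWeightSum_eq_halves b
  have crosswise : hammingWeightSum ((a + b) / 2) + hammingWeightSum ((a + b + 1) / 2) =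
      hammingWeightSum (a / 2 + (b + 1) / 2) + hammingWeightSum ((a + 1) / 2 + b / 2) := by
    have : (a / 2 + (b + 1) / 2 = (a + b) / 2 ∧ (a + 1) / 2 + b / 2 = (a + b + 1) / 2) ∨
        (a / 2 + (b + 1) / 2 = (a + b + 1) / 2 ∧ (a + 1) / 2 + b / 2 = (a + b) / 2) := by omega
    rcases this with ⟨e₁, e₂⟩ | ⟨e₁, e₂⟩ <;> rw [e₁, e₂]
    exact add_comm _ _
  omega
termination_by a + b

theorem hammingDist_cons {n : ℕ} {β : Fin (n + 1) → Type*} [∀ i, DecidableEq (β i)]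
    (a b : β 0) (x y : ∀ i : Fin n, β i.succ) :
    hammingDist (Fin.cons a x : ∀ i, β i) (Fin.cons b y) =
      (if a = b then 0 else 1) + hammingDist x y := by
  simp only [hammingDist, card_filter, Fin.sum_univ_succ, Fin.cons_zero, Fin.cons_succ]
  split_ifs <;> simp_all

section ConsSlice

variable {n : ℕ} {β : Type*} [Fintype β] [DecidableEq β]

def consSlice (V : Finset (Fin (n + 1) → β)) (b : β) : Finset (Fin n → β) :=
  {x | Fin.cons b x ∈ V}

theorem sum_eq_sum_consSlice {M : Type*} [AddCommMonoid M] (V : Finset (Fin (n + 1) → β))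
    (g : (Fin (n + 1) → β) → M) :
    ∑ x ∈ V, g x = ∑ b, ∑ x ∈ consSlice V b, g (Fin.cons b x) := by
  simp only [consSlice, sum_filter, ← Fintype.sum_prod_type']
  exact ((Fin.consEquiv fun _ => β).sum_comp fun x => if x ∈ V then g x else 0).trans
    (Fintype.sum_ite_mem V g) |>.symm

theorem card_eq_sum_card_consSlice (V : Finset (Fin (n + 1) → β)) :
    #V = ∑ b, #(consSlice V b) := by
  simp only [card_eq_sum_ones]
  exact sum_eq_sum_consSlice V _

end ConsSlice

/-- Counts ordered pairs, so every edge of the induced subgraph is counted twice. -/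
def edgeCount {ι β : Type*} [Fintype ι] [DecidableEq β] (V : Finset (ι → β)) : ℕ :=
  #{p ∈ V ×ˢ V | hammingDist p.1 p.2 = 1}

theorem edgeCount_eq_sum {ι β : Type*} [Fintype ι] [DecidableEq β] (V : Finset (ι → β)) :
    edgeCount V = ∑ x ∈ V, ∑ y ∈ V, if hammingDist x y = 1 then 1 else 0 := by
  rw [edgeCount, card_filter, sum_product]

theorem edgeCount_eq_consSlice {n : ℕ} (V : Finset (Fin (n + 1) → Bool)) :
    edgeCount V = edgeCount (consSlice V false) + edgeCount (consSlice V true) +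
      2 * #(consSlice V false ∩ consSlice V true) := by
  simp only [edgeCount_eq_sum, sum_eq_sum_consSlice V, Fintype.sum_bool, hammingDist_cons,
    Bool.false_eq_true, Bool.true_eq_false, if_true, if_false, zero_add, add_eq_left,
    hammingDist_eq_zero, sum_ite_eq, sum_add_distrib, sum_ite_mem, inter_comm (consSlice V true),
    ← card_eq_sum_ones]
  ring

theorem edgeCount_le_two_mul_hammingWeightSum :
    ∀ {n : ℕ} (V : Finset (Fin n → Bool)), edgeCount V ≤ 2 * hammingWeightSum #V
  | 0, V => by
    simp [edgeCount_eq_sum, hammingDist_eq_zero.mpr (Subsingleton.elim _ _)]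
  | n + 1, V => by
    rw [edgeCount_eq_consSlice, card_eq_sum_card_consSlice, Fintype.sum_bool]
    have h₀ := edgeCount_le_two_mul_hammingWeightSum (consSlice V false)
    have h₁ := edgeCount_le_two_mul_hammingWeightSum (consSlice V true)
    have hinter : #(consSlice V false ∩ consSlice V true) ≤
        min #(consSlice V false) #(consSlice V true) :=
      le_min (card_le_card inter_subset_left) (card_le_card inter_subset_right)
    have := hammingWeightSum_add_add_min_le #(consSlice V true) #(consSlice V false)
    omega

theorem hypercube_edge_maximum_general (d n : ℕ)
    (V : Finset (Fin d → Bool)) (hV : V.card = n) :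
    (Finset.filter (fun p : (Fin d → Bool) × (Fin d → Bool) => hammingDist p.1 p.2 = 1)
        (V ×ˢ V)).card
      ≤ 2 * ∑ k ∈ Finset.range n, hammingWeight k :=
  hV ▸ edgeCount_le_two_mul_hammingWeightSum V

theorem hypercube_edge_maximum (d n : ℕ) (hn : n ≤ 2 ^ d)
    (V : Finset (Fin d → Bool)) (hV : V.card = n) :
    (Finset.filter (fun p : (Fin d → Bool) × (Fin d → Bool) => hammingDist p.1 p.2 = 1)
        (V ×ˢ V)).card
      ≤ 2 * ∑ k ∈ Finset.range n, hammingWeight k :=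
  hypercube_edge_maximum_general d n V hV
end

section
/- For any finite subset V of ℤ^d of size n, the number of pairs {u,v} ⊆ V with ℓ¹-distance exactly 1 is at most ∑_{k=0}^{n-1} H(k), where H is the Hamming weight function. -/
open Finset

lemma hammingWeight_two_mul (m : ℕ) : hammingWeight (2 * m) = hammingWeight m := by
  rcases Nat.eq_zero_or_pos m with rfl | hm
  · rfl
  · rw [hammingWeight, Nat.digits_def' one_lt_two (by omega)]
    simp [hammingWeight]

lemma hammingWeight_two_mul_add_one (m : ℕ) :
    hammingWeight (2 * m + 1) = hammingWeight m + 1 := by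
  rw [hammingWeight, Nat.digits_def' one_lt_two (by omega), Nat.mul_add_mod, Nat.mul_add_div two_pos]
  simp [hammingWeight, Nat.add_comm]

lemma hammingWeightSum_succ (m : ℕ) :
    hammingWeightSum (m + 1) = hammingWeightSum m + hammingWeight m :=
  sum_range_succ _ _

lemma hammingWeightSum_add_self (m : ℕ) :
    hammingWeightSum (m + m) = 2 * hammingWeightSum m + m := by
  induction m with
  | zero => rfl
  | succ k ih =>
    rw [show k + 1 + (k + 1) = k + k + 1 + 1 by ring, hammingWeightSum_succ, hammingWeightSum_succ,
      ih, ← two_mul, hammingWeight_two_mul, hammingWeight_two_mul_add_one, hammingWeightSum_succ]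
    ring

lemma hammingWeightSum_add_of_le_of_le {p q : ℕ} (hpq : p ≤ q) (hqp : q ≤ p + 1) :
    hammingWeightSum (p + q) = hammingWeightSum p + hammingWeightSum q + p := by
  obtain rfl | rfl : q = p ∨ q = p + 1 := by omega
  · rw [hammingWeightSum_add_self]
    ring
  · rw [← add_assoc, hammingWeightSum_succ, hammingWeightSum_add_self, hammingWeightSum_succ,
      ← two_mul, hammingWeight_two_mul]
    ring

section Lattice

variable {ι : Type*} [Fintype ι]

def latticeEdges (S T : Finset (ι → ℤ)) : Finset ((ι → ℤ) × (ι → ℤ)) :=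
  (S ×ˢ T).filter fun p => ∑ i, |p.1 i - p.2 i| = 1

lemma mem_latticeEdges {S T : Finset (ι → ℤ)} {p : (ι → ℤ) × (ι → ℤ)} :
    p ∈ latticeEdges S T ↔ p.1 ∈ S ∧ p.2 ∈ T ∧ ∑ i, |p.1 i - p.2 i| = 1 := by
  simp [latticeEdges, and_assoc]

lemma eq_add_single_of_lt_of_sum_abs_sub_eq_one [DecidableEq ι] {x y : ι → ℤ} {i : ι}
    (hxy : x i < y i) (h : ∑ j, |x j - y j| = 1) : y = x + Pi.single i 1 := by
  rw [← add_sum_erase _ _ (mem_univ i), abs_of_neg (sub_neg.2 hxy)] at h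
  have hrest : ∑ j ∈ univ.erase i, |x j - y j| = 0 := by
    have : 0 ≤ ∑ j ∈ univ.erase i, |x j - y j| := sum_nonneg fun j _ => abs_nonneg _
    omega
  have hzero := (sum_eq_zero_iff_of_nonneg fun j _ => abs_nonneg _).1 hrest
  ext j
  rcases eq_or_ne j i with rfl | hj
  · simp only [Pi.add_apply, Pi.single_eq_same]
    omega
  · have := abs_eq_zero.1 (hzero j (mem_erase.2 ⟨hj, mem_univ j⟩))
    simp only [Pi.add_apply, Pi.single_eq_of_ne hj]
    omega

lemma card_latticeEdges_le_min {S T : Finset (ι → ℤ)} (i : ι)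
    (hST : ∀ x ∈ S, ∀ y ∈ T, x i < y i) : #(latticeEdges S T) ≤ min #S #T := by
  classical
  have hstep : ∀ p ∈ latticeEdges S T, p.2 = p.1 + Pi.single i 1 := by
    intro p hp
    obtain ⟨h₁, h₂, h⟩ := mem_latticeEdges.1 hp
    exact eq_add_single_of_lt_of_sum_abs_sub_eq_one (hST _ h₁ _ h₂) h
  refine le_min (card_le_card_of_injOn Prod.fst (fun p hp => (mem_latticeEdges.1 hp).1) ?_)
    (card_le_card_of_injOn Prod.snd (fun p hp => (mem_latticeEdges.1 hp).2.1) ?_)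
  · intro p hp q hq h
    exact Prod.ext h (by rw [hstep p hp, hstep q hq, h])
  · intro p hp q hq h
    refine Prod.ext (add_right_cancel (b := Pi.single i 1) ?_) h
    rw [← hstep p hp, ← hstep q hq, h]

lemma card_latticeEdges_comm (S T : Finset (ι → ℤ)) :
    #(latticeEdges S T) = #(latticeEdges T S) := by
  refine card_nbij' Prod.swap Prod.swap ?_ ?_ (fun _ _ => rfl) (fun _ _ => rfl) <;>
  · intro p hp
    rw [mem_coe, mem_latticeEdges] at hp ⊢
    simp only [Prod.fst_swap, Prod.snd_swap, abs_sub_comm (p.2 _)]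
    exact ⟨hp.2.1, hp.1, hp.2.2⟩

lemma card_latticeEdges_union_le [DecidableEq (ι → ℤ)] (A B : Finset (ι → ℤ)) :
    #(latticeEdges (A ∪ B) (A ∪ B)) ≤
      #(latticeEdges A A) + #(latticeEdges B B) + #(latticeEdges A B) + #(latticeEdges B A) := by
  simp only [latticeEdges, union_product, product_union, filter_union]
  grw [card_union_le, card_union_le, card_union_le]
  omega

lemma latticeEdges_eq_empty_of_subsingleton {V : Finset (ι → ℤ)}
    (hV : (V : Set (ι → ℤ)).Subsingleton) : latticeEdges V V = ∅ := by
  refine eq_empty_of_forall_notMem fun p hp => ?_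
  obtain ⟨h₁, h₂, h⟩ := mem_latticeEdges.1 hp
  simp [hV h₁ h₂] at h

theorem card_latticeEdges_self_le (V : Finset (ι → ℤ)) :
    #(latticeEdges V V) ≤ 2 * hammingWeightSum #V := by
  classical
  induction V using Finset.strongInduction with
  | H V ih =>
  by_cases hsep : ∀ u ∈ V, ∀ v ∈ V, ∀ i, u i ≤ v i
  · rw [latticeEdges_eq_empty_of_subsingleton fun u hu v hv =>
      funext fun i => le_antisymm (hsep u hu v hv i) (hsep v hv u hu i)]
    simp
  push Not at hsep
  obtain ⟨v, hv, u, hu, i, hi⟩ := hsep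
  set A := V.filter fun w => w i ≤ u i
  set B := V.filter fun w => ¬w i ≤ u i
  have hAB : ∀ x ∈ A, ∀ y ∈ B, x i < y i := by
    simp only [A, B, mem_filter]
    intro x hx y hy
    omega
  have hcross := card_latticeEdges_le_min i hAB
  have hA := ih A (filter_ssubset.2 ⟨v, hv, by omega⟩)
  have hB := ih B (filter_ssubset.2 ⟨u, hu, by simp⟩)
  have hsum := hammingWeightSum_add_add_min_le #A #B
  rw [card_filter_add_card_filter_not] at hsum
  calc #(latticeEdges V V) = #(latticeEdges (A ∪ B) (A ∪ B)) := by
        rw [filter_union_filter_not_eq]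
    _ ≤ #(latticeEdges A A) + #(latticeEdges B B) + #(latticeEdges A B) + #(latticeEdges B A) :=
        card_latticeEdges_union_le A B
    _ ≤ 2 * hammingWeightSum #V := by
        rw [card_latticeEdges_comm B A]
        omega

end Lattice

theorem lattice_edge_maximum (d n : ℕ) (V : Finset (Fin d → ℤ)) (hV : V.card = n) :
    (Finset.filter (fun p : (Fin d → ℤ) × (Fin d → ℤ) => (∑ i, |p.1 i - p.2 i|) = 1)
        (V ×ˢ V)).card
      ≤ 2 * ∑ k ∈ Finset.range n, hammingWeight k :=
  hV ▸ card_latticeEdges_self_le V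
end

section
/- Let V be a finite subset of ℤ^d. Then there exists a subset V' of {0,1}^{d'} for some d' such that |V'| = |V| and the number of pairs at ℓ¹-distance 1 in V' equals the number of pairs at ℓ¹-distance 1 in V. -/
/-!
Shift the finite set into a box `[0, M]^d` and write each coordinate `a` in unary, as the `M`
bits `[j < a]` for `j < M`. Two unary words of `a` and `b` differ in exactly `|a - b|` bits, so
this map into `{0,1}^{dM}` preserves the `ℓ¹`-distance on the box. It is therefore injective
there and matches the pairs at distance `1` of `V` with those of its image.
-/

open Finset

def unaryCode (a : ℤ) (j : ℕ) : ℤ := if (j : ℤ) < a then 1 else 0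

lemma unaryCode_eq_zero_or_one (a : ℤ) (j : ℕ) : unaryCode a j = 0 ∨ unaryCode a j = 1 := by
  unfold unaryCode
  split_ifs <;> simp

lemma sum_range_unaryCode {M : ℕ} {a : ℤ} (h₀ : 0 ≤ a) (hM : a ≤ M) :
    ∑ j ∈ range M, unaryCode a j = a := by
  have hfilter : (range M).filter (fun j : ℕ => (j : ℤ) < a) = range a.toNat := by
    ext j
    simp only [mem_filter, mem_range]
    omega
  simp only [unaryCode]
  rw [sum_boole, hfilter, card_range]
  omega

lemma sum_range_abs_sub_unaryCode_of_le {M : ℕ} {a b : ℤ} (hb : 0 ≤ b) (hba : b ≤ a)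
    (ha : a ≤ M) : ∑ j ∈ range M, |unaryCode a j - unaryCode b j| = |a - b| := by
  have hterm (j : ℕ) : |unaryCode a j - unaryCode b j| = unaryCode a j - unaryCode b j := by
    unfold unaryCode
    split_ifs <;> norm_num
    omega
  simp only [hterm, sum_sub_distrib]
  rw [sum_range_unaryCode (hb.trans hba) ha, sum_range_unaryCode hb (hba.trans ha),
    abs_of_nonneg (sub_nonneg.mpr hba)]

lemma sum_range_abs_sub_unaryCode {M : ℕ} {a b : ℤ} (ha₀ : 0 ≤ a) (ha : a ≤ M)
    (hb₀ : 0 ≤ b) (hb : b ≤ M) : ∑ j ∈ range M, |unaryCode a j - unaryCode b j| = |a - b| := by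
  rcases le_total b a with hba | hab
  · exact sum_range_abs_sub_unaryCode_of_le hb₀ hba ha
  · simp only [abs_sub_comm (unaryCode a _), abs_sub_comm a]
    exact sum_range_abs_sub_unaryCode_of_le ha₀ hab hb

/-- Coordinate `i` of `v`, shifted by `s`, is written in unary in the block `{i} × Fin M`. -/
def unaryEmbedding {d : ℕ} (M : ℕ) (s : ℤ) (v : Fin d → ℤ) : Fin (d * M) → ℤ :=
  fun k => unaryCode (v (finProdFinEquiv.symm k).1 + s) (finProdFinEquiv.symm k).2

lemma sum_abs_sub_unaryEmbedding {d M : ℕ} {s : ℤ} {u v : Fin d → ℤ}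
    (hu : ∀ i, 0 ≤ u i + s ∧ u i + s ≤ M) (hv : ∀ i, 0 ≤ v i + s ∧ v i + s ≤ M) :
    ∑ k, |unaryEmbedding M s u k - unaryEmbedding M s v k| = ∑ i, |u i - v i| := by
  rw [← finProdFinEquiv.sum_comp, Fintype.sum_prod_type]
  refine sum_congr rfl fun i _ => ?_
  simp only [unaryEmbedding, Equiv.symm_apply_apply]
  rw [Fin.sum_univ_eq_sum_range (fun j => |unaryCode (u i + s) j - unaryCode (v i + s) j|),
    sum_range_abs_sub_unaryCode (hu i).1 (hu i).2 (hv i).1 (hv i).2, add_sub_add_right_eq_sub]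

lemma exists_forall_natAbs_le {ι : Type*} [Fintype ι] (V : Finset (ι → ℤ)) :
    ∃ N : ℕ, ∀ v ∈ V, ∀ i, (v i).natAbs ≤ N :=
  ⟨V.sup fun v => univ.sup fun i => (v i).natAbs, fun v hv i =>
    (le_sup (f := fun i => (v i).natAbs) (mem_univ i)).trans
      (le_sup (f := fun v => univ.sup fun i => (v i).natAbs) hv)⟩

lemma sum_abs_sub_eq_zero_iff {ι : Type*} [Fintype ι] {u v : ι → ℤ} :
    ∑ i, |u i - v i| = 0 ↔ u = v := by
  simp [sum_eq_zero_iff_of_nonneg, sub_eq_zero, funext_iff]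

lemma injOn_of_sum_abs_sub_eq {ι κ : Type*} [Fintype ι] [Fintype κ] {V : Set (ι → ℤ)}
    {f : (ι → ℤ) → (κ → ℤ)}
    (hf : ∀ u ∈ V, ∀ v ∈ V, ∑ k, |f u k - f v k| = ∑ i, |u i - v i|) : V.InjOn f := by
  intro u hu v hv huv
  rw [← sum_abs_sub_eq_zero_iff, ← hf u hu v hv, huv, sum_abs_sub_eq_zero_iff]

lemma card_filter_image_product {α β : Type*} [DecidableEq α] [DecidableEq β] {s : Finset α}
    {f : α → β} (hf : Set.InjOn f s) (p : β × β → Prop) [DecidablePred p] :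
    ((s.image f ×ˢ s.image f).filter p).card
      = ((s ×ˢ s).filter fun q => p (f q.1, f q.2)).card := by
  rw [← prodMap_image_product, filter_image, card_image_of_injOn]
  · rfl
  · refine Set.InjOn.mono ?_ (hf.prodMap hf)
    simpa only [coe_product] using coe_subset.mpr (filter_subset _ (s ×ˢ s))

theorem lattice_to_hypercube (d : ℕ) (V : Finset (Fin d → ℤ)) :
    ∃ (d' : ℕ) (V' : Finset (Fin d' → ℤ)),
      (∀ v ∈ V', ∀ i, v i = 0 ∨ v i = 1) ∧
      V'.card = V.card ∧
      (Finset.filter (fun p : (Fin d' → ℤ) × (Fin d' → ℤ) => (∑ i, |p.1 i - p.2 i|) = 1)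
          (V' ×ˢ V')).card
        = (Finset.filter (fun p : (Fin d → ℤ) × (Fin d → ℤ) => (∑ i, |p.1 i - p.2 i|) = 1)
            (V ×ˢ V)).card := by
  classical
  obtain ⟨N, hN⟩ := exists_forall_natAbs_le V
  have hbox : ∀ v ∈ V, ∀ i, 0 ≤ v i + N ∧ v i + N ≤ (2 * N : ℕ) := fun v hv i => by
    have := hN v hv i
    omega
  set e := unaryEmbedding (d := d) (2 * N) N
  have hiso : ∀ u ∈ V, ∀ v ∈ V, ∑ k, |e u k - e v k| = ∑ i, |u i - v i| :=
    fun u hu v hv => sum_abs_sub_unaryEmbedding (hbox u hu) (hbox v hv)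
  have hinj : Set.InjOn e V := injOn_of_sum_abs_sub_eq hiso
  refine ⟨d * (2 * N), V.image e, ?_, card_image_of_injOn hinj, ?_⟩
  · simp only [mem_image, forall_exists_index, and_imp]
    rintro _ v _ rfl k
    exact unaryCode_eq_zero_or_one _ _
  · rw [card_filter_image_product hinj]
    exact congrArg card (filter_congr fun q hq => by
      rw [mem_product] at hq
      rw [hiso q.1 hq.1 q.2 hq.2])
end

section
/- Let a_1, ..., a_d be integers with at least two of them nonzero. Then the set of (t_1, ..., t_d) in an open subset of ℝ^d satisfying 2∑_{i<j} a_i a_j cos(t_i - t_j) = 1 - ∑_j a_j² contains no nonempty open set; equivalently, the identity 2∑_{i<j} a_i a_j cos(t_i - t_j) = 1 - a_1² - ... - a_d² cannot hold for all (t_1,...,t_d) in a nonempty open subset of ℝ^d. -/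
/-!
The left-hand side is a real-analytic function of `t`, so if the identity holds on a nonempty
open set it holds on all of `ℝ^d`. At an angle vector with entries in `{0, π}` it reads
`(∑ ± a_k)² = 1`. With `S = ∑ a_k`, flipping the signs of no coefficient, of `a_i`, of `a_j`,
and of both gives `S² = (S - 2a_i)² = (S - 2a_j)² = (S - 2a_i - 2a_j)² = 1`, which forces
`a_i = 0` or `a_j = 0`.
-/

open Finset Real
open scoped ContDiff

theorem sq_sum_eq_sum_sq_add_two_mul_sum_lt {ι R : Type*} [Fintype ι] [LinearOrder ι]
    [CommSemiring R] (b : ι → R) :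
    (∑ i, b i) ^ 2 =
      ∑ i, b i ^ 2 + 2 * ∑ p ∈ univ.filter (fun p : ι × ι => p.1 < p.2), b p.1 * b p.2 := by
  have hsplit : ∀ i j : ι, b i * b j = (if i = j then b i ^ 2 else 0) +
      (if i < j then b i * b j else 0) + (if j < i then b j * b i else 0) := by
    intro i j
    rcases lt_trichotomy i j with h | rfl | h
    · simp [h, h.ne, h.not_gt]
    · simp [sq]
    · simp [h, h.ne', h.not_gt, mul_comm]
  rw [sq, sum_mul_sum, sum_filter, ← univ_product_univ, sum_product,
    sum_congr rfl fun i _ => sum_congr rfl fun j _ => hsplit i j]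
  simp only [sum_add_distrib, sum_ite_eq, mem_univ, if_true]
  rw [sum_comm (f := fun i j => if j < i then b j * b i else 0)]
  ring

theorem sum_mul_cos_ite_mem {ι : Type*} [Fintype ι] [DecidableEq ι] (a : ι → ℝ)
    (s : Finset ι) :
    ∑ k, a k * cos (if k ∈ s then π else 0) = ∑ k, a k - 2 * ∑ k ∈ s, a k := by
  have h : ∀ k, a k * cos (if k ∈ s then π else 0) = a k - 2 * if k ∈ s then a k else 0 := by
    intro k
    split_ifs <;> simp only [cos_pi, cos_zero] <;> ring
  simp only [h, sum_sub_distrib, ← mul_sum, sum_ite_mem, univ_inter]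

section CosSum

variable {ι : Type*} [Fintype ι] [LinearOrder ι]

theorem contDiff_two_mul_sum_lt_cos_sub (a : ι → ℝ) :
    ContDiff ℝ ω fun t : ι → ℝ =>
      2 * ∑ p ∈ univ.filter (fun p : ι × ι => p.1 < p.2), a p.1 * a p.2 * cos (t p.1 - t p.2) := by
  fun_prop

theorem two_mul_sum_lt_cos_sub_of_sin_eq_zero (a : ι → ℝ) {t : ι → ℝ}
    (ht : ∀ k, sin (t k) = 0) :
    2 * ∑ p ∈ univ.filter (fun p : ι × ι => p.1 < p.2), a p.1 * a p.2 * cos (t p.1 - t p.2) =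
      (∑ k, a k * cos (t k)) ^ 2 - ∑ k, a k ^ 2 := by
  have hcos_sub : ∀ p q, a p * a q * cos (t p - t q) = a p * cos (t p) * (a q * cos (t q)) := by
    intro p q
    rw [cos_sub, ht, ht]
    ring
  have hsq : ∀ k, a k ^ 2 = (a k * cos (t k)) ^ 2 := by
    intro k
    rw [mul_pow, cos_sq', ht]
    ring
  simp only [hcos_sub, hsq, sq_sum_eq_sum_sq_add_two_mul_sum_lt fun k => a k * cos (t k)]
  ring

end CosSum

theorem eq_zero_or_eq_zero_of_sq_sub_two_mul_eq_one {S x y : ℝ} (h₀ : S ^ 2 = 1)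
    (hx : (S - 2 * x) ^ 2 = 1) (hy : (S - 2 * y) ^ 2 = 1) (hxy : (S - 2 * (x + y)) ^ 2 = 1) :
    x = 0 ∨ y = 0 := by
  have hx' : x * (x - S) = 0 := by linear_combination (hx - h₀) / 4
  have hy' : y * (y - S) = 0 := by linear_combination (hy - h₀) / 4
  rcases mul_eq_zero.mp hx' with hx0 | hxS
  · exact .inl hx0
  rcases mul_eq_zero.mp hy' with hy0 | hyS
  · exact .inr hy0
  rw [sub_eq_zero.mp hxS, sub_eq_zero.mp hyS] at hxy
  exfalso
  linarith

theorem cos_identity_not_on_open_set (d : ℕ) (a : Fin d → ℤ)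
    (ha : 2 ≤ (Finset.univ.filter (fun j => a j ≠ 0)).card) :
    ¬ ∃ U : Set (Fin d → ℝ), IsOpen U ∧ U.Nonempty ∧
      ∀ t ∈ U,
        2 * ∑ p ∈ Finset.univ.filter (fun p : Fin d × Fin d => p.1 < p.2),
            (a p.1 : ℝ) * (a p.2 : ℝ) * Real.cos (t p.1 - t p.2)
          = 1 - ∑ j, (a j : ℝ) ^ 2 := by
  classical
  rintro ⟨U, hUo, ⟨t₀, ht₀⟩, hU⟩
  obtain ⟨i, hi, j, hj, hij⟩ := one_lt_card.mp ha
  rw [mem_filter] at hi hj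
  have hglobal := (contDiff_two_mul_sum_lt_cos_sub fun k => (a k : ℝ)).analyticOnNhd
    |>.eq_of_eventuallyEq analyticOnNhd_const (Filter.eventually_of_mem (hUo.mem_nhds ht₀) hU)
  have hsigns : ∀ s : Finset (Fin d), (∑ k, (a k : ℝ) - 2 * ∑ k ∈ s, (a k : ℝ)) ^ 2 = 1 := by
    intro s
    have h₁ := congrFun hglobal fun k => if k ∈ s then π else 0
    have h₂ := two_mul_sum_lt_cos_sub_of_sin_eq_zero (fun k => (a k : ℝ))
      (t := fun k => if k ∈ s then π else 0) fun k => by split_ifs <;> simp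
    beta_reduce at h₁ h₂
    rw [sum_mul_cos_ite_mem] at h₂
    linarith
  rcases eq_zero_or_eq_zero_of_sq_sub_two_mul_eq_one (x := a i) (y := a j)
      (by simpa using hsigns ∅) (by simpa using hsigns {i}) (by simpa using hsigns {j})
      (by simpa [sum_pair hij] using hsigns {i, j}) with hai | haj
  · exact hi.2 (Int.cast_eq_zero.mp hai)
  · exact hj.2 (Int.cast_eq_zero.mp haj)
end

section
/- For integers a_1, ..., a_d with at least two nonzero, the set A = { (u_1,...,u_d) ∈ (S¹)^d : ‖a_1u_1 + ... + a_du_d‖ = 1 } is a closed, nowhere dense subset of (S¹)^d. -/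
/-!
Fix a point `u` of the interior and an index `m` with `a m ≠ 0`. Rotating the single coordinate
`u m` by small angles keeps `u` in the set, so, with `c = ∑ a i u i - a m u m`, the vector
`c + a m v` has the same norm for all `v` on an arc of the circle through `u m`. Then `⟪c, v⟫` is
constant on that arc, which forces `c = 0`: near `u`, the sum equals `a m u m` for every such `m`.
With two such indices `j ≠ k`, rotating `u j` alone keeps `a k u k`, hence the sum and `a j u j`,
unchanged, which is absurd.
-/

open Module Filter Real Metric Set
open scoped RealInnerProductSpace Topology

noncomputable section

namespace Orientation

variable {V : Type*} [NormedAddCommGroup V] [InnerProductSpace ℝ V] [Fact (finrank ℝ V = 2)]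
  (o : Orientation ℝ V (Fin 2))

theorem inner_rotation_coe (t : ℝ) (c v : V) :
    ⟪c, o.rotation t v⟫ = cos t * ⟪c, v⟫ - sin t * o.areaForm c v := by
  rw [rotation_apply, inner_add_right, real_inner_smul_right, real_inner_smul_right,
    inner_rightAngleRotation_right, Real.Angle.cos_coe, Real.Angle.sin_coe]
  ring

theorem continuous_rotation_coe_apply (v : V) : Continuous fun t : ℝ => o.rotation t v := by
  simp only [rotation_apply, Real.Angle.cos_coe, Real.Angle.sin_coe]
  fun_prop

theorem eq_zero_of_eventually_inner_rotation_eq {c v : V} (hv : v ≠ 0)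
    (h : ∀ᶠ t : ℝ in 𝓝 0, ⟪c, o.rotation t v⟫ = ⟪c, v⟫) : c = 0 := by
  have h_neg : ∀ᶠ t : ℝ in 𝓝 0, ⟪c, o.rotation (-t : ℝ) v⟫ = ⟪c, v⟫ :=
    (continuous_neg.tendsto' 0 0 neg_zero).eventually h
  obtain ⟨t, ⟨h_pos, h_neg⟩, ht⟩ :=
    (((h.and h_neg).filter_mono nhdsWithin_le_nhds).and (Ioo_mem_nhdsGT pi_pos)).exists
  rw [inner_rotation_coe] at h_pos h_neg
  rw [cos_neg, sin_neg] at h_neg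
  have hsin : 0 < sin t := sin_pos_of_pos_of_lt_pi ht.1 ht.2
  have hcos : cos t ≠ 1 := fun h1 => by nlinarith [sin_sq_add_cos_sq t]
  have hω : o.areaForm c v = 0 :=
    (mul_eq_zero.1 (by linear_combination (h_neg - h_pos) / 2 : sin t * o.areaForm c v = 0))
      |>.resolve_left hsin.ne'
  have hinner : ⟪c, v⟫ = 0 :=
    (mul_eq_zero.1 (by linear_combination h_pos + sin t * hω : (cos t - 1) * ⟪c, v⟫ = 0))
      |>.resolve_left (sub_ne_zero.2 hcos)
  have h_sq := o.inner_sq_add_areaForm_sq c v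
  rw [hinner, hω] at h_sq
  simpa [hv] using h_sq.symm

theorem eq_zero_of_eventually_norm_add_smul_rotation_eq {c v : V} {b : ℝ} (hv : v ≠ 0)
    (hb : b ≠ 0) (h : ∀ᶠ t : ℝ in 𝓝 0, ‖c + b • o.rotation t v‖ = ‖c + b • v‖) : c = 0 := by
  refine o.eq_zero_of_eventually_inner_rotation_eq hv (h.mono fun t ht => ?_)
  have h_sq := congrArg (· ^ 2) ht
  simp only [norm_add_sq_real, real_inner_smul_right, norm_smul,
    LinearIsometryEquiv.norm_map] at h_sq
  exact mul_left_cancel₀ (mul_ne_zero two_ne_zero hb) (by linear_combination h_sq)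

end Orientation

section SphereTuples

variable {V : Type*} [NormedAddCommGroup V] [InnerProductSpace ℝ V] {ι : Type*}

def weightedSum [Fintype ι] (a : ι → ℝ) (u : ι → sphere (0 : V) 1) : V :=
  ∑ i, a i • (u i : V)

theorem continuous_weightedSum [Fintype ι] (a : ι → ℝ) :
    Continuous (weightedSum (V := V) a) := by
  unfold weightedSum
  fun_prop

theorem isClosed_setOf_norm_weightedSum_eq [Fintype ι] (a : ι → ℝ) (r : ℝ) :
    IsClosed {u : ι → sphere (0 : V) 1 | ‖weightedSum a u‖ = r} :=
  isClosed_eq (continuous_weightedSum a).norm continuous_const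

variable [Fact (finrank ℝ V = 2)]

theorem nonempty_orientation_of_finrank_eq_two : Nonempty (Orientation ℝ V (Fin 2)) :=
  have : FiniteDimensional ℝ V := .of_fact_finrank_eq_two
  ⟨(finBasisOfFinrankEq ℝ V Fact.out).orientation⟩

namespace Orientation

variable [DecidableEq ι] (o : Orientation ℝ V (Fin 2))

def rotateCoord (j : ι) (t : ℝ) (u : ι → sphere (0 : V) 1) : ι → sphere (0 : V) 1 :=
  Function.update u j ⟨o.rotation t (u j), by simp⟩

theorem rotateCoord_zero (j : ι) (u : ι → sphere (0 : V) 1) : o.rotateCoord j 0 u = u := by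
  simp [rotateCoord]

theorem continuous_rotateCoord (j : ι) (u : ι → sphere (0 : V) 1) :
    Continuous fun t => o.rotateCoord j t u :=
  continuous_const.update j ((o.continuous_rotation_coe_apply (u j)).subtype_mk _)

theorem eventually_rotateCoord_mem_interior {s : Set (ι → sphere (0 : V) 1)}
    {u : ι → sphere (0 : V) 1} (hu : u ∈ interior s) (j : ι) :
    ∀ᶠ t : ℝ in 𝓝 0, o.rotateCoord j t u ∈ interior s :=
  (o.continuous_rotateCoord j u).continuousAt.preimage_mem_nhds <| by
    rw [rotateCoord_zero]
    exact isOpen_interior.mem_nhds hu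

theorem weightedSum_rotateCoord [Fintype ι] (a : ι → ℝ) (j : ι) (t : ℝ)
    (u : ι → sphere (0 : V) 1) :
    weightedSum a (o.rotateCoord j t u) = weightedSum a u + a j • (o.rotation t (u j) - u j) := by
  simp only [weightedSum, rotateCoord,
    Function.apply_update (fun i (x : sphere (0 : V) 1) => a i • (x : V))]
  rw [Finset.sum_update_of_mem (Finset.mem_univ j), ← Finset.add_sum_erase _ _ (Finset.mem_univ j),
    Finset.sdiff_singleton_eq_erase]
  module

end Orientation

variable [Fintype ι] [DecidableEq ι]

theorem weightedSum_eq_smul_of_mem_interior {a : ι → ℝ} {r : ℝ} {u : ι → sphere (0 : V) 1}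
    (hu : u ∈ interior {u | ‖weightedSum a u‖ = r}) {m : ι} (hm : a m ≠ 0) :
    weightedSum a u = a m • (u m : V) := by
  obtain ⟨o⟩ := nonempty_orientation_of_finrank_eq_two (V := V)
  rw [← sub_eq_zero]
  refine o.eq_zero_of_eventually_norm_add_smul_rotation_eq (ne_zero_of_mem_unit_sphere (u m)) hm ?_
  filter_upwards [o.eventually_rotateCoord_mem_interior hu m] with t ht
  have h_t : o.rotateCoord m t u ∈ {u | ‖weightedSum a u‖ = r} := interior_subset ht
  have h_0 : u ∈ {u | ‖weightedSum a u‖ = r} := interior_subset hu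
  rw [mem_ofPred_eq, o.weightedSum_rotateCoord] at h_t
  rw [sub_add_cancel, h_0, ← h_t]
  congr 1
  module

theorem interior_setOf_norm_weightedSum_eq_eq_empty {a : ι → ℝ} {j k : ι} (hjk : j ≠ k)
    (hj : a j ≠ 0) (hk : a k ≠ 0) (r : ℝ) :
    interior {u : ι → sphere (0 : V) 1 | ‖weightedSum a u‖ = r} = ∅ := by
  obtain ⟨o⟩ := nonempty_orientation_of_finrank_eq_two (V := V)
  refine eq_empty_iff_forall_notMem.2 fun x hx => ?_
  have hxj : (x j : V) ≠ 0 := ne_zero_of_mem_unit_sphere (x j)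
  refine hxj (o.eq_zero_of_eventually_inner_rotation_eq hxj ?_)
  filter_upwards [o.eventually_rotateCoord_mem_interior hx j] with t ht
  have h_xj := weightedSum_eq_smul_of_mem_interior hx hj
  have h_xk := weightedSum_eq_smul_of_mem_interior hx hk
  have h_tj := weightedSum_eq_smul_of_mem_interior ht hj
  have h_tk := weightedSum_eq_smul_of_mem_interior ht hk
  simp only [Orientation.rotateCoord, Function.update_self, Function.update_of_ne hjk.symm]
    at h_tj h_tk
  rw [smul_right_injective V hj (h_tj.symm.trans (h_tk.trans (h_xk.symm.trans h_xj)))]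

theorem isNowhereDense_setOf_norm_weightedSum_eq {a : ι → ℝ} {j k : ι} (hjk : j ≠ k)
    (hj : a j ≠ 0) (hk : a k ≠ 0) (r : ℝ) :
    IsNowhereDense {u : ι → sphere (0 : V) 1 | ‖weightedSum a u‖ = r} :=
  (isClosed_setOf_norm_weightedSum_eq a r).isNowhereDense_iff.2 <|
    interior_setOf_norm_weightedSum_eq_eq_empty hjk hj hk r

end SphereTuples

end

theorem bad_set_closed_nowhere_dense (d : ℕ) (a : Fin d → ℤ)
    (ha : 2 ≤ (Finset.univ.filter (fun j => a j ≠ 0)).card) :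
    IsClosed {u : Fin d → Metric.sphere (0 : EuclideanSpace ℝ (Fin 2)) 1 |
        ‖∑ j, (a j : ℝ) • (u j : EuclideanSpace ℝ (Fin 2))‖ = 1} ∧
      interior (closure {u : Fin d → Metric.sphere (0 : EuclideanSpace ℝ (Fin 2)) 1 |
        ‖∑ j, (a j : ℝ) • (u j : EuclideanSpace ℝ (Fin 2))‖ = 1}) = ∅ := by
  obtain ⟨j, hj, k, hk, hjk⟩ := Finset.one_lt_card.1 ha
  rw [Finset.mem_filter] at hj hk
  have : Fact (finrank ℝ (EuclideanSpace ℝ (Fin 2)) = 2) := ⟨finrank_euclideanSpace_fin⟩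
  exact ⟨isClosed_setOf_norm_weightedSum_eq _ 1, isNowhereDense_setOf_norm_weightedSum_eq hjk
    (Int.cast_ne_zero.2 hj.2) (Int.cast_ne_zero.2 hk.2) 1⟩
end

section
/- The set of good direction sets is a dense G_δ subset of the configuration space F(E,d) of d-tuples of distinct unit vectors with principal arguments in [0,π). -/
/-!
Write `Σ a` for `∑ a_j u_j`. A tuple is good iff `‖Σ a‖ ≠ 1` for every `a ∈ ℤ^d` that does not
have exactly one nonzero entry, so the good set is a countable intersection of open sets, and by
Baire's theorem (the configuration space is an open subset of the locally compact space `E^d`)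
it suffices that each of them is dense. For `a ≠ 0`, since no two distinct directions of `E` are
parallel, some `r` with `a_r ≠ 0` leaves a nonzero remainder `w = Σ a - a_r u_r`; rotating `u_r`
to `e^{iθ}`, the norm `‖a_r e^{iθ} + w‖` cannot be constant on any interval of angles, because
its square is `|a_r|² + |w|² + 2 Re (a_r conj(w) e^{iθ})`.
-/

/-- The set `E` of unit complex numbers with principal argument in `[0, π)`. -/
def Edir : Type := {z : ℂ // ‖z‖ = 1 ∧ z.arg ∈ Set.Ico 0 Real.pi}

noncomputable instance : TopologicalSpace Edir := instTopologicalSpaceSubtype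

/-- The configuration space `F(E,d)` of `d`-tuples of distinct directions in `E`. -/
def ConfSpace (d : ℕ) : Type := {u : Fin d → Edir // Function.Injective u}

noncomputable instance (d : ℕ) : TopologicalSpace (ConfSpace d) := instTopologicalSpaceSubtype

/-- The set of good direction sets inside the configuration space. -/
def GoodSet (d : ℕ) : Set (ConfSpace d) :=
  {u | ∀ a : Fin d → ℤ,
    ‖∑ j, (a j : ℂ) * (u.val j).val‖ = 1 → ∃! j, a j ≠ 0}

open Complex ComplexConjugate Filter Topology
open scoped Real

lemma eq_zero_of_re_mul_exp_eq {z : ℂ} {φ δ c : ℝ} (hδ : 0 < δ) (hδπ : δ < π)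
    (hm : (z * exp (↑(φ - δ) * I)).re = c) (h₀ : (z * exp (↑φ * I)).re = c)
    (hp : (z * exp (↑(φ + δ) * I)).re = c) : z = 0 := by
  set ζ := z * exp (↑φ * I)
  have shift : ∀ t : ℝ, (z * exp (↑(φ + t) * I)).re = ζ.re * Real.cos t - ζ.im * Real.sin t := by
    intro t
    rw [Complex.ofReal_add, add_mul, Complex.exp_add, ← mul_assoc, Complex.mul_re,
      exp_ofReal_mul_I_re, exp_ofReal_mul_I_im]
  rw [sub_eq_add_neg, shift, Real.cos_neg, Real.sin_neg] at hm
  rw [shift] at hp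
  have hcos : Real.cos δ < 1 := by
    simpa using Real.cos_lt_cos_of_nonneg_of_le_pi le_rfl hδπ.le hδ
  have hsin : 0 < Real.sin δ := Real.sin_pos_of_pos_of_lt_pi hδ hδπ
  have hre : ζ.re * (1 - Real.cos δ) = 0 := by linear_combination h₀ - (hm + hp) / 2
  have him : ζ.im * Real.sin δ = 0 := by linear_combination (hm - hp) / 2
  have hζ : ζ = 0 := Complex.ext
    ((mul_eq_zero.mp hre).resolve_right (sub_ne_zero.mpr hcos.ne'))
    ((mul_eq_zero.mp him).resolve_right hsin.ne')
  simpa [ζ, Complex.exp_ne_zero] using hζ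

lemma eq_zero_of_eventually_re_mul_exp_eq {z : ℂ} {θ₀ c : ℝ}
    (h : ∀ᶠ θ : ℝ in 𝓝[>] θ₀, (z * exp (θ * I)).re = c) : z = 0 := by
  obtain ⟨ε, hε, hsub⟩ := mem_nhdsGT_iff_exists_Ioo_subset.mp h
  obtain ⟨δ, hδ, hδε, hδπ⟩ : ∃ δ, 0 < δ ∧ 3 * δ < ε - θ₀ ∧ δ < π := by
    have := lt_min (sub_pos.mpr hε) Real.pi_pos
    refine ⟨min (ε - θ₀) π / 4, by positivity, ?_, ?_⟩
    · linarith [min_le_left (ε - θ₀) π]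
    · linarith [min_le_right (ε - θ₀) π]
  have at_step : ∀ k : ℝ, 0 < k → k ≤ 3 → (z * exp (↑(θ₀ + k * δ) * I)).re = c :=
    fun k hk hk3 => hsub ⟨by nlinarith, by nlinarith⟩
  refine eq_zero_of_re_mul_exp_eq (φ := θ₀ + 2 * δ) hδ hδπ ?_ (at_step 2 two_pos (by norm_num)) ?_
  · rw [show θ₀ + 2 * δ - δ = θ₀ + 1 * δ by ring]; exact at_step 1 one_pos (by norm_num)
  · rw [show θ₀ + 2 * δ + δ = θ₀ + 3 * δ by ring]; exact at_step 3 three_pos le_rfl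

lemma eq_zero_of_eventually_norm_mul_exp_add_eq {t w : ℂ} (ht : t ≠ 0) {θ₀ r : ℝ}
    (h : ∀ᶠ θ : ℝ in 𝓝[>] θ₀, ‖t * exp (θ * I) + w‖ = r) : w = 0 := by
  suffices conj w * t = 0 by simpa [ht] using this
  refine eq_zero_of_eventually_re_mul_exp_eq (θ₀ := θ₀) (c := (r ^ 2 - ‖t‖ ^ 2 - ‖w‖ ^ 2) / 2) ?_
  filter_upwards [h] with θ hθ
  have expand := Complex.normSq_add (t * exp (θ * I)) w
  simp only [Complex.normSq_eq_norm_sq, hθ, norm_mul, Complex.norm_exp_ofReal_mul_I] at expand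
  rw [show conj w * t * exp (θ * I) = t * exp (θ * I) * conj w by ring]
  linarith

namespace Edir

lemma property_iff {z : ℂ} : ‖z‖ = 1 ∧ z.arg ∈ Set.Ico 0 π ↔
    ‖z‖ = 1 ∧ 0 ≤ z.im ∧ z ∈ slitPlane := by
  refine and_congr_right fun hz => ?_
  have hz0 : z ≠ 0 := by rintro rfl; simp at hz
  rw [Set.mem_Ico, arg_nonneg_iff, mem_slitPlane_iff_arg, (arg_le_pi z).lt_iff_ne]
  tauto

lemma val_ne_neg (z w : Edir) : z.val ≠ -w.val := by
  intro h
  obtain ⟨hz, hzim, hzs⟩ := property_iff.mp z.prop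
  obtain ⟨-, hwim, hws⟩ := property_iff.mp w.prop
  rw [mem_slitPlane_iff] at hzs hws
  simp only [h, neg_re, neg_im] at hzim hzs
  have him : w.val.im = 0 := by linarith
  have hre : w.val.re = 0 := by grind
  have : w.val = 0 := Complex.ext hre him
  simp [h, this] at hz

lemma intCast_mul_ne {z w : Edir} (hzw : z ≠ w) {b : ℤ} (hb : b ≠ 0) (c : ℤ) :
    (b : ℂ) * z.val ≠ c * w.val := by
  intro h
  have habs : |b| = |c| := by
    have := congrArg norm h
    rwa [norm_mul, norm_mul, z.prop.1, w.prop.1, norm_intCast, norm_intCast, mul_one, mul_one,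
      ← Int.cast_abs, ← Int.cast_abs, Int.cast_inj] at this
  have hbC : (b : ℂ) ≠ 0 := Int.cast_ne_zero.mpr hb
  rcases abs_eq_abs.mp habs with rfl | rfl
  · exact hzw (Subtype.ext (mul_left_cancel₀ hbC h))
  · refine val_ne_neg z w (mul_left_cancel₀ hbC ?_)
    push_cast at h ⊢
    linear_combination h

lemma isLocallyClosed_setOf :
    IsLocallyClosed {z : ℂ | ‖z‖ = 1 ∧ z.arg ∈ Set.Ico 0 π} := by
  simp_rw [property_iff, ← and_assoc, Set.ofPred_and]
  exact ((isClosed_eq continuous_norm continuous_const).inter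
    (isClosed_le continuous_const continuous_im)).isLocallyClosed.inter
    isOpen_slitPlane.isLocallyClosed

instance : LocallyCompactSpace Edir := isLocallyClosed_setOf.locallyCompactSpace

instance : T2Space Edir := inferInstanceAs (T2Space (Subtype _))

-- Clamping makes this total and continuous in `θ` while keeping the angle in `[0, π)`.
noncomputable def ofClampedAngle (c : ℝ) (hc : c < π) (θ : ℝ) : Edir :=
  ⟨exp (↑(max 0 (min θ c)) * I), by
    have h0 : 0 ≤ max 0 (min θ c) := le_max_left _ _
    have hπ : max 0 (min θ c) < π := max_lt Real.pi_pos ((min_le_right _ _).trans_lt hc)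
    refine ⟨norm_exp_ofReal_mul_I _, ?_⟩
    rw [exp_mul_I, arg_cos_add_sin_mul_I ⟨by linarith [Real.pi_pos], hπ.le⟩]
    exact ⟨h0, hπ⟩⟩

lemma continuous_ofClampedAngle (c : ℝ) (hc : c < π) : Continuous (ofClampedAngle c hc) :=
  by unfold ofClampedAngle; fun_prop

lemma ofClampedAngle_val {c : ℝ} (hc : c < π) {θ : ℝ} (hθ : θ ∈ Set.Icc 0 c) :
    (ofClampedAngle c hc θ).val = exp (θ * I) := by
  simp only [ofClampedAngle, min_eq_left hθ.2, max_eq_right hθ.1]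

lemma ofClampedAngle_arg {c : ℝ} (hc : c < π) (z : Edir) (hz : z.val.arg ≤ c) :
    ofClampedAngle c hc z.val.arg = z :=
  Subtype.ext <| by
    rw [ofClampedAngle_val hc ⟨z.prop.2.1, hz⟩]
    simpa [z.prop.1] using norm_mul_exp_arg_mul_I z.val

end Edir

noncomputable def intComb {ι : Type*} [Fintype ι] (a : ι → ℤ) (v : ι → Edir) : ℂ :=
  ∑ j, (a j : ℂ) * (v j).val

section intComb

variable {ι : Type*} [Fintype ι]

lemma continuous_intComb (a : ι → ℤ) : Continuous (intComb a) := by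
  unfold intComb; fun_prop

lemma intComb_update [DecidableEq ι] (a : ι → ℤ) (v : ι → Edir) (r : ι) (x : Edir) :
    intComb a (Function.update v r x) = a r * x.val + (intComb a v - a r * (v r).val) := by
  have : (fun j => (a j : ℂ) * (Function.update v r x j).val) =
      Function.update (fun j => (a j : ℂ) * (v j).val) r (a r * x.val) := by
    ext j; rcases eq_or_ne j r with rfl | hj <;> simp [*]
  rw [intComb, this, Finset.sum_update_of_mem (Finset.mem_univ r), ← Finset.compl_eq_univ_sdiff,
    intComb, ← Finset.sum_compl_add_sum {r}, Finset.sum_singleton]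
  ring

lemma exists_intComb_sub_ne_zero {a : ι → ℤ} {v : ι → Edir} (hv : Function.Injective v)
    {p q : ι} (hpq : p ≠ q) (hp : a p ≠ 0) (hq : a q ≠ 0) :
    ∃ r, a r ≠ 0 ∧ intComb a v - a r * (v r).val ≠ 0 := by
  by_contra! h
  exact Edir.intCast_mul_ne (hv.ne hpq) hp (a q)
    ((sub_eq_zero.mp (h p hp)).symm.trans (sub_eq_zero.mp (h q hq)))

end intComb

lemma isOpen_setOf_injective {ι X : Type*} [Finite ι] [TopologicalSpace X] [T2Space X] :
    IsOpen {f : ι → X | Function.Injective f} := by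
  have : {f : ι → X | Function.Injective f} = ⋂ i, ⋂ j, ⋂ (_ : i ≠ j), {f | f i ≠ f j} := by
    ext f; simp [Function.Injective, not_imp_not]
  rw [this]
  exact isOpen_iInter_of_finite fun i => isOpen_iInter_of_finite fun j =>
    isOpen_iInter_of_finite fun _ => isOpen_ne_fun (continuous_apply i) (continuous_apply j)

namespace ConfSpace

variable {d : ℕ}

instance : T2Space (ConfSpace d) := inferInstanceAs (T2Space (Subtype _))

instance : LocallyCompactSpace (ConfSpace d) :=
  isOpen_setOf_injective.isLocallyClosed.locallyCompactSpace

lemma isOpen_setOf_norm_intComb_ne (a : Fin d → ℤ) (ρ : ℝ) :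
    IsOpen {u : ConfSpace d | ‖intComb a u.val‖ ≠ ρ} :=
  isOpen_ne_fun ((continuous_intComb a).comp continuous_subtype_val).norm continuous_const

lemma mem_closure_setOf_norm_intComb_ne (u : ConfSpace d) {a : Fin d → ℤ} {r : Fin d}
    (har : a r ≠ 0) (hw : intComb a u.val - a r * (u.val r).val ≠ 0) (ρ : ℝ) :
    u ∈ closure {v : ConfSpace d | ‖intComb a v.val‖ ≠ ρ} := by
  set θr := (u.val r).val.arg
  have hθr : θr < (θr + π) / 2 := by linarith [(u.val r).prop.2.2]
  have hc : (θr + π) / 2 < π := by linarith [(u.val r).prop.2.2]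
  let γ : ℝ → Fin d → Edir := fun θ => Function.update u.val r (Edir.ofClampedAngle _ hc θ)
  have hγ : Tendsto γ (𝓝[>] θr) (𝓝 u.val) := by
    have hγθr : γ θr = u.val := by simp [γ, θr, Edir.ofClampedAngle_arg hc _ hθr.le]
    rw [← hγθr]
    exact (continuous_const.update r (Edir.continuous_ofClampedAngle _ hc)).tendsto θr
      |>.mono_left nhdsWithin_le_nhds
  have hinj : ∀ᶠ θ in 𝓝[>] θr, Function.Injective (γ θ) :=
    hγ.eventually (isOpen_setOf_injective.mem_nhds u.prop)
  have hangle : ∀ᶠ θ in 𝓝[>] θr, (Edir.ofClampedAngle _ hc θ).val = exp (θ * I) := by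
    filter_upwards [Ioo_mem_nhdsGT hθr] with θ hθ
    exact Edir.ofClampedAngle_val hc ⟨(u.val r).prop.2.1.trans hθ.1.le, hθ.2.le⟩
  have hne : ∃ᶠ θ : ℝ in 𝓝[>] θr,
      ‖(a r : ℂ) * exp (θ * I) + (intComb a u.val - a r * (u.val r).val)‖ ≠ ρ :=
    not_eventually.mp fun h => hw <|
      eq_zero_of_eventually_norm_mul_exp_add_eq (Int.cast_ne_zero.mpr har) h
  refine closure_subtype.mpr (mem_closure_of_frequently_of_tendsto ?_ hγ)
  refine (hne.and_eventually (hinj.and hangle)).mono fun θ ⟨hθ, hθinj, hθval⟩ => ?_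
  refine ⟨⟨γ θ, hθinj⟩, ?_, rfl⟩
  show ‖intComb a (γ θ)‖ ≠ ρ
  rwa [intComb_update, hθval]

lemma dense_setOf_norm_intComb_ne {a : Fin d → ℤ} (ha : ¬∃! j, a j ≠ 0) {ρ : ℝ} (hρ : ρ ≠ 0) :
    Dense {u : ConfSpace d | ‖intComb a u.val‖ ≠ ρ} := by
  rcases eq_or_ne a 0 with rfl | ha0
  · simp [intComb, hρ.symm]
  obtain ⟨p, hp⟩ := Function.ne_iff.mp ha0
  obtain ⟨q, hq, hqp⟩ : ∃ q, a q ≠ 0 ∧ q ≠ p := by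
    by_contra! h
    exact ha ⟨p, hp, h⟩
  intro u
  obtain ⟨r, har, hw⟩ := exists_intComb_sub_ne_zero u.prop hqp hq hp
  exact mem_closure_setOf_norm_intComb_ne u har hw ρ

end ConfSpace

lemma goodSet_eq_biInter (d : ℕ) :
    GoodSet d = ⋂ a ∈ {a : Fin d → ℤ | ¬∃! j, a j ≠ 0}, {u | ‖intComb a u.val‖ ≠ 1} := by
  ext u
  simp only [GoodSet, Set.mem_iInter, Set.mem_ofPred_eq, intComb, not_imp_not]

theorem goodSet_dense_Gdelta (d : ℕ) :
    Dense (GoodSet d) ∧ IsGδ (GoodSet d) := by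
  rw [goodSet_eq_biInter]
  exact ⟨dense_biInter_of_isOpen (fun a _ => ConfSpace.isOpen_setOf_norm_intComb_ne a 1)
      (Set.to_countable _) fun a ha => ConfSpace.dense_setOf_norm_intComb_ne ha one_ne_zero,
    IsGδ.biInter_of_isOpen (Set.to_countable _) fun a _ => ConfSpace.isOpen_setOf_norm_intComb_ne a 1⟩
end
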